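/- arXiv:1501.07587 — 2 statements merged into one kernel-verified Lean document; each statement's English description precedes it below -/
import Mathlib

section
/- Let O be a discrete valuation ring with maximal ideal p and fraction field F, and let n ≥ 1. For g ∈ GL_n(F), let η·g ∈ F^n denote the last row of g, where η = (0,…,0,1). Then g belongs to the product set P_n · GL_n(O) (with P_n = {h ∈ GL_n(F) : η·h = η} the mirabolic subgroup) if and only if the last row of g lies in O^n but not in p^n (i.e., it is a primitive vector of O^n). -/
/-!
The mirabolic subgroup `P_n` is the stabiliser of `η` for the right action of `GL_n(F)` on row
vectors, so `g ∈ P_n · GL_n(O)` exactly when `η·g` is the last row of some `k ∈ GL_n(O)`. Over a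
local ring such rows are precisely the vectors with a unit entry: a row lying in the maximal ideal
forces the determinant into it (Laplace expansion along that row), and conversely a vector `v` with
`v j` a unit replaces row `j` of the identity matrix, giving determinant `v j`, and a row swap moves
it to the last place.
-/

open Matrix

/-- The last-coordinate row vector η = (0,…,0,1). -/
def eta (K : Type*) [Semiring K] (n : ℕ) : Fin n → K :=
  fun i => if (i : ℕ) = n - 1 then 1 else 0

/-- The mirabolic subgroup P_n = {g ∈ GL_n(K) : η·g = η}. -/
def mirabolic (K : Type*) [Field K] (n : ℕ) : Subgroup (GL (Fin n) K) where
  carrier := {g | Matrix.vecMul (eta K n) (g : Matrix (Fin n) (Fin n) K) = eta K n}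
  one_mem' := by simp [Matrix.vecMul_one]
  mul_mem' := by
    intro a b ha hb
    simp only [Set.mem_setOf_eq] at *
    rw [Units.val_mul, ← Matrix.vecMul_vecMul, ha, hb]
  inv_mem' := by
    intro a ha
    simp only [Set.mem_setOf_eq] at *
    have : Matrix.vecMul (Matrix.vecMul (eta K n) (a : Matrix (Fin n) (Fin n) K))
        ((a⁻¹ : GL (Fin n) K) : Matrix (Fin n) (Fin n) K) = eta K n := by
      rw [Matrix.vecMul_vecMul, ← Units.val_mul, mul_inv_cancel, Units.val_one,
        Matrix.vecMul_one]
    rwa [ha] at this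

lemma vecMul_eta {R : Type*} [Semiring R] {n : ℕ} (hn : 1 ≤ n) (B : Matrix (Fin n) (Fin n) R) :
    vecMul (eta R n) B = B ⟨n - 1, Nat.sub_lt hn one_pos⟩ := by
  have h : eta R n = Pi.single ⟨n - 1, Nat.sub_lt hn one_pos⟩ 1 := by
    ext i
    simp [eta, Pi.single_apply, Fin.ext_iff]
  rw [h, Matrix.single_one_vecMul]
  rfl

lemma mul_inv_mem_mirabolic_iff {K : Type*} [Field K] {n : ℕ} (g h : GL (Fin n) K) :
    g * h⁻¹ ∈ mirabolic K n ↔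
      vecMul (eta K n) (g : Matrix (Fin n) (Fin n) K) =
        vecMul (eta K n) (h : Matrix (Fin n) (Fin n) K) := by
  change vecMul _ ((g * h⁻¹ : GL (Fin n) K) : Matrix (Fin n) (Fin n) K) = _ ↔ _
  rw [Units.val_mul, ← vecMul_vecMul]
  have cancel : ∀ v, vecMul (vecMul v (h⁻¹ : GL (Fin n) K)) (h : Matrix (Fin n) (Fin n) K) = v :=
    fun v => by rw [vecMul_vecMul, ← Units.val_mul, inv_mul_cancel, Units.val_one, vecMul_one]
  constructor
  · intro hgh
    rw [← cancel (vecMul _ _), hgh]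
  · intro hgh
    rw [hgh, vecMul_vecMul, ← Units.val_mul, mul_inv_cancel, Units.val_one, vecMul_one]

lemma exists_mem_mirabolic_mul_iff {K ι : Type*} [Field K] {n : ℕ} (f : ι → GL (Fin n) K)
    (g : GL (Fin n) K) :
    (∃ p ∈ mirabolic K n, ∃ k, g = p * f k) ↔
      ∃ k, vecMul (eta K n) (g : Matrix (Fin n) (Fin n) K) =
        vecMul (eta K n) (f k : Matrix (Fin n) (Fin n) K) := by
  simp_rw [← mul_inv_mem_mirabolic_iff]
  constructor
  · rintro ⟨p, hp, k, rfl⟩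
    exact ⟨k, by rwa [mul_inv_cancel_right]⟩
  · rintro ⟨k, hk⟩
    exact ⟨_, hk, k, (inv_mul_cancel_right g (f k)).symm⟩

section Rows

variable {R n : Type*} [CommRing R] [Fintype n] [DecidableEq n]

lemma Matrix.det_mem_of_row_mem {I : Ideal R} (M : Matrix n n R) (i : n) (h : ∀ j, M i j ∈ I) :
    M.det ∈ I := by
  rw [det_eq_sum_mul_adjugate_row M i]
  exact I.sum_mem fun j _ => I.mul_mem_right _ (h j)

lemma IsLocalRing.exists_isUnit_of_isUnit_det [IsLocalRing R] {M : Matrix n n R}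
    (hM : IsUnit M.det) (i : n) : ∃ j, IsUnit (M i j) := by
  by_contra! h
  exact (IsLocalRing.mem_maximalIdeal _).mp
    (M.det_mem_of_row_mem i fun j => (IsLocalRing.mem_maximalIdeal _).mpr (h j)) hM

lemma Matrix.det_updateRow_one (j : n) (v : n → R) :
    (updateRow (1 : Matrix n n R) j v).det = v j := by
  have hv : ∑ k, v k • (1 : Matrix n n R) k = v := by
    ext l
    simp [one_apply]
  simpa [hv] using det_updateRow_sum (1 : Matrix n n R) j v

lemma exists_generalLinearGroup_row_eq_of_isUnit (v : n → R) {j : n} (hj : IsUnit (v j))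
    (i : n) :
    ∃ k : GL n R, (k : Matrix n n R) i = v := by
  let M := (updateRow (1 : Matrix n n R) j v).submatrix (Equiv.swap i j) id
  have hM : IsUnit M.det := by
    rw [det_permute, det_updateRow_one]
    exact ((Equiv.Perm.sign _).isUnit.map (Int.castRingHom R)).mul hj
  refine ⟨((isUnit_iff_isUnit_det M).mpr hM).unit, ?_⟩
  ext l
  simp [M]

lemma IsLocalRing.exists_generalLinearGroup_row_eq_iff [IsLocalRing R] (v : n → R) (i : n) :
    (∃ k : GL n R, (k : Matrix n n R) i = v) ↔ ∃ j, IsUnit (v j) := by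
  constructor
  · rintro ⟨k, rfl⟩
    exact exists_isUnit_of_isUnit_det ((isUnit_iff_isUnit_det _).mp k.isUnit) i
  · rintro ⟨j, hj⟩
    exact exists_generalLinearGroup_row_eq_of_isUnit v hj i

end Rows

lemma IsLocalRing.exists_isUnit_comp_eq_iff {R S ι : Type*} [CommRing R] [IsLocalRing R]
    [Semiring S] {φ : R →+* S} (hφ : Function.Injective φ) (w : ι → S) :
    ((∀ i, ∃ a, φ a = w i) ∧ ¬ ∀ i, ∃ a ∈ maximalIdeal R, φ a = w i) ↔
      ∃ v : ι → R, (∃ j, IsUnit (v j)) ∧ φ ∘ v = w := by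
  constructor
  · rintro ⟨hw, hm⟩
    choose v hv using hw
    obtain ⟨j, hj⟩ := not_forall.mp hm
    exact ⟨v, ⟨j, not_not.mp fun hu => hj ⟨v j, (mem_maximalIdeal _).mpr hu, hv j⟩⟩, funext hv⟩
  · rintro ⟨v, ⟨j, hj⟩, rfl⟩
    refine ⟨fun i => ⟨v i, rfl⟩, fun hm => ?_⟩
    obtain ⟨a, ha, hav⟩ := hm j
    exact (mem_maximalIdeal _).mp (hφ hav ▸ ha) hj

/-- over the fraction field F of a DVR O, an element g of GL_n(F)
lies in P_n·GL_n(O) if and only if its last row η·g lies in O^n but not in p^n,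
i.e. it is a primitive vector of O^n. -/
theorem stmt_7 (O : Type*) [CommRing O] [IsDomain O] [IsDiscreteValuationRing O]
    (F : Type*) [Field F] [Algebra O F] [IsFractionRing O F]
    (n : ℕ) (hn : 1 ≤ n) (g : GL (Fin n) F) :
    (∃ p ∈ mirabolic F n, ∃ k : GL (Fin n) O,
        g = p * Units.map ((algebraMap O F).mapMatrix.toMonoidHom) k) ↔
      ((∀ i, ∃ a : O, algebraMap O F a =
          Matrix.vecMul (eta F n) (g : Matrix (Fin n) (Fin n) F) i) ∧
        ¬ (∀ i, ∃ a ∈ IsLocalRing.maximalIdeal O, algebraMap O F a =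
          Matrix.vecMul (eta F n) (g : Matrix (Fin n) (Fin n) F) i)) := by
  rw [exists_mem_mirabolic_mul_iff,
    IsLocalRing.exists_isUnit_comp_eq_iff (IsFractionRing.injective O F)]
  simp only [vecMul_eta hn]
  set last : Fin n := ⟨n - 1, Nat.sub_lt hn one_pos⟩
  simp_rw [← IsLocalRing.exists_generalLinearGroup_row_eq_iff _ last]
  constructor
  · rintro ⟨k, hk⟩
    exact ⟨_, ⟨k, rfl⟩, hk.symm⟩
  · rintro ⟨_, ⟨k, rfl⟩, hk⟩
    exact ⟨k, hk.symm⟩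
end

section
/- Let F be a nonarchimedean local field with ring of integers O, uniformizer ϖ, and normalized valuation v. For x ∈ Fˣ and n ≥ 1, write diag-scalar z = x·I_n ∈ GL_n(F). Then every g ∈ GL_n(F) can be written g = p·z·k with p in the mirabolic subgroup P_n = {h : η·h = η}, z a scalar matrix, and k ∈ GL_n(O). -/
/-! The last row `η g` of `g` is nonzero. As `O` is a valuation ring, dividing that row by its
coordinate of largest absolute value writes it as `z • v` with `v ∈ Oⁿ` having a coordinate equal
to `1`. A row with a unit coordinate is the last row of some `k ∈ GL_n(O)`, so `η g = η (z k)`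
and `g (z k)⁻¹` lies in the mirabolic subgroup. -/

open Matrix

theorem eta_eq_single (K : Type*) [Semiring K] {n : ℕ} (hn : 1 ≤ n) :
    eta K n = Pi.single (⟨n - 1, by omega⟩ : Fin n) 1 := by
  funext i
  simp [eta, Pi.single_apply, Fin.ext_iff]

theorem mul_inv_mem_mirabolic {K : Type*} [Field K] {n : ℕ} {g h : GL (Fin n) K}
    (hgh : eta K n ᵥ* (g : Matrix (Fin n) (Fin n) K) =
      eta K n ᵥ* (h : Matrix (Fin n) (Fin n) K)) :
    g * h⁻¹ ∈ mirabolic K n := by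
  change eta K n ᵥ* ((g * h⁻¹ : GL (Fin n) K) : Matrix (Fin n) (Fin n) K) = eta K n
  rw [Units.val_mul, ← vecMul_vecMul, hgh, vecMul_vecMul, ← Units.val_mul, mul_inv_cancel,
    Units.val_one, vecMul_one]

theorem ValuationRing.exists_eq_smul_algebraMap_comp_of_ne_zero (O : Type*) [CommRing O]
    [IsDomain O] [ValuationRing O] {F : Type*} [Field F] [Algebra O F] [IsFractionRing O F]
    {ι : Type*} [Finite ι] {r : ι → F} (hr : r ≠ 0) :
    ∃ (z : Fˣ) (v : ι → O) (j : ι), v j = 1 ∧ r = (z : F) • (algebraMap O F ∘ v) := by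
  obtain ⟨i, hi⟩ := Function.ne_iff.mp hr
  have : Nonempty ι := ⟨i⟩
  obtain ⟨j, hj⟩ := Finite.exists_max fun l => ValuationRing.valuation O F (r l)
  have hrj : r j ≠ 0 := by
    intro h
    apply hi
    simpa [h] using hj i
  have hquot : ∀ l, ∃ a : O, algebraMap O F a = r l / r j := fun l =>
    (ValuationRing.mem_integer_iff O F _).mp <| by
      rw [Valuation.mem_integer_iff, map_div₀]
      exact div_le_one_of_le₀ (hj l) zero_le
  choose v hv using hquot
  refine ⟨Units.mk0 _ hrj, v, j, ?_, ?_⟩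
  · apply IsFractionRing.injective O F
    rw [hv, div_self hrj, map_one]
  · funext l
    simp [hv, mul_div_cancel₀ _ hrj]

theorem Matrix.exists_GL_row_eq {R : Type*} [CommRing R] {ι : Type*} [Fintype ι]
    [DecidableEq ι] (i j : ι) (v : ι → R) (hv : IsUnit (v j)) :
    ∃ k : GL ι R, (k : Matrix ι ι R) i = v := by
  set σ := Equiv.swap i j
  set M : Matrix ι ι R := ((1 : Matrix ι ι R).updateRow i (v ∘ σ)).submatrix id σ
  have hdet : M.det = Equiv.Perm.sign σ * v j := by
    -- Cramer's rule for the identity matrix: `det (updateRow 1 i w) = w i`.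
    rw [det_permute', ← cramer_transpose_apply, transpose_one, cramer_one]
    simp [σ]
  refine ⟨nonsingInvUnit M ?_, ?_⟩
  · rw [hdet]
    exact ((Equiv.Perm.sign σ).isUnit.map (Int.castRingHom R)).mul hv
  · funext l
    show M i l = v l
    simp [M, σ]

/-- over a nonarchimedean local field F (fraction field of a
complete DVR O), every g ∈ GL_n(F) decomposes as g = p·z·k with p in the
mirabolic subgroup, z a scalar matrix and k ∈ GL_n(O). -/
theorem stmt_14 (O : Type*) [CommRing O] [IsDomain O] [IsDiscreteValuationRing O]
    (F : Type*) [Field F] [Algebra O F] [IsFractionRing O F]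
    (n : ℕ) (hn : 1 ≤ n) (g : GL (Fin n) F) :
    ∃ p ∈ mirabolic F n, ∃ z : Fˣ, ∃ k : GL (Fin n) O,
      g = p * Units.map (Matrix.scalar (Fin n)).toMonoidHom z *
        Units.map ((algebraMap O F).mapMatrix.toMonoidHom) k := by
  have hrow : eta F n ᵥ* (g : Matrix (Fin n) (Fin n) F) ≠ 0 := by
    rw [← zero_vecMul (g : Matrix (Fin n) (Fin n) F)]
    refine (vecMul_injective_of_isUnit g.isUnit).ne ?_
    rw [eta_eq_single F hn]
    exact Pi.single_ne_zero_iff.mpr one_ne_zero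
  obtain ⟨z, v, j, hvj, hrv⟩ := ValuationRing.exists_eq_smul_algebraMap_comp_of_ne_zero O hrow
  obtain ⟨k, hk⟩ := exists_GL_row_eq ⟨n - 1, by omega⟩ j v (hvj ▸ isUnit_one)
  set h := Units.map (Matrix.scalar (Fin n)).toMonoidHom z *
    Units.map ((algebraMap O F).mapMatrix.toMonoidHom) k
  refine ⟨g * h⁻¹, mul_inv_mem_mirabolic ?_, z, k,
    by rw [mul_assoc (g * h⁻¹), inv_mul_cancel_right]⟩
  rw [hrv, eta_eq_single F hn, single_one_vecMul]
  funext l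
  simp [h, hk]
end
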